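/- arXiv:2010.08753 — 5 statements merged into one kernel-verified Lean document; each statement's English description precedes it below -/
import Mathlib

section
/- For r > 3 and u ∈ V ∩ L^{r+1}, the convective term satisfies ‖B(u)‖_{V'} ≤ ‖u‖_{L^{r+1}}^{(r+1)/(r−1)} · ‖u‖_{H}^{(r−3)/(r−1)}. -/
open MeasureTheory ENNReal

/-- The trilinear form `b(u,v,w) = ∫ (u·∇)v · w`. -/
noncomputable def trilinearForm {d : ℕ}
    (u v w : EuclideanSpace ℝ (Fin d) → EuclideanSpace ℝ (Fin d)) : ℝ :=
  ∫ x, ∑ i, ∑ j,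
    u x i * fderiv ℝ (fun y => v y j) x (EuclideanSpace.single i 1) * w x j

/-- The `V`-norm `‖w‖_V = ‖∇w‖_{L²}`. -/
noncomputable def VNorm {d : ℕ}
    (w : EuclideanSpace ℝ (Fin d) → EuclideanSpace ℝ (Fin d)) : ℝ :=
  Real.sqrt (∫ x, ∑ i, ∑ j,
    (fderiv ℝ (fun y => w y j) x (EuclideanSpace.single i 1)) ^ 2)


section Aux
variable {d : ℕ}
local notation "E" => EuclideanSpace ℝ (Fin d)

lemma comp_contDiff {w : E → E} (hw : ContDiff ℝ (⊤ : ℕ∞) w) (j : Fin d) :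
    ContDiff ℝ (⊤ : ℕ∞) (fun x => w x j) := by
  have h := ContDiff.comp (ContinuousLinearMap.contDiff
    (EuclideanSpace.proj (𝕜 := ℝ) (ι := Fin d) j)) hw
  exact h

lemma comp_support {w : E → E} (hw : HasCompactSupport w) (j : Fin d) :
    HasCompactSupport (fun x => w x j) :=
  hw.comp_left (g := fun z : E => z j) rfl

lemma deriv_cont {w : E → E} (hw : ContDiff ℝ (⊤ : ℕ∞) w) (j : Fin d) (e : E) :
    Continuous (fun x => fderiv ℝ (fun y => w y j) x e) :=
  ((comp_contDiff hw j).continuous_fderiv (by simp)).clm_apply continuous_const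

lemma deriv_support {w : E → E} (hw' : HasCompactSupport w) (j : Fin d) (e : E) :
    HasCompactSupport (fun x => fderiv ℝ (fun y => w y j) x e) :=
  ((comp_support hw' j).fderiv ℝ).comp_left (g := fun L : E →L[ℝ] ℝ => L e) rfl

lemma hcs_sum {ι : Type*} (s : Finset ι) (f : ι → E → ℝ)
    (h : ∀ i, HasCompactSupport (f i)) :
    HasCompactSupport (fun x => ∑ i ∈ s, f i x) := by
  classical
  induction s using Finset.induction with
  | empty => simp only [Finset.sum_empty]; exact HasCompactSupport.zero
  | insert _ _ hx ih =>
    simp only [Finset.sum_insert hx]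
    exact (h _).add ih

end Aux

section Aux2
variable {d : ℕ}
local notation "E" => EuclideanSpace ℝ (Fin d)
local notation "e" i => EuclideanSpace.single (𝕜 := ℝ) i (1 : ℝ)

lemma byparts {f g : E → ℝ} (hf : ContDiff ℝ (⊤ : ℕ∞) f) (hg : ContDiff ℝ (⊤ : ℕ∞) g)
    (hfs : HasCompactSupport f) (hgs : HasCompactSupport g) (w : E) :
    ∫ x, fderiv ℝ f x w * g x = - ∫ x, fderiv ℝ g x w * f x := by
  obtain ⟨C, hC⟩ := ContDiff.lipschitzWith_of_hasCompactSupport hfs hf (by simp)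
  obtain ⟨D, hD⟩ := ContDiff.lipschitzWith_of_hasCompactSupport hgs hg (by simp)
  have key := LipschitzWith.integral_lineDeriv_mul_eq (μ := volume) hC hD hgs w
  have h1 : ∀ x : E, lineDeriv ℝ f x w = fderiv ℝ f x w := fun x =>
    ((hf.differentiable (by simp)) x).lineDeriv_eq_fderiv
  have h2 : ∀ x : E, lineDeriv ℝ g x (-w) = - fderiv ℝ g x w := fun x => by
    rw [((hg.differentiable (by simp)) x).lineDeriv_eq_fderiv, map_neg]
  simp only [h1, h2, neg_mul] at key
  rw [key, integral_neg]

lemma term_integrable {u v w : E → E} (hu : ContDiff ℝ (⊤ : ℕ∞) u) (hv : ContDiff ℝ (⊤ : ℕ∞) v)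
    (hw : ContDiff ℝ (⊤ : ℕ∞) w) (hus : HasCompactSupport u) (i j : Fin d) :
    Integrable (fun x => u x i * fderiv ℝ (fun y => v y j) x
      (EuclideanSpace.single i 1) * w x j) volume := by
  apply Continuous.integrable_of_hasCompactSupport
  · exact (((comp_contDiff hu i).continuous).mul (deriv_cont hv j _)).mul
      ((comp_contDiff hw j).continuous)
  · exact ((comp_support hus i).mul_right).mul_right

lemma tf_repr {u v w : E → E} (hu : ContDiff ℝ (⊤ : ℕ∞) u) (hv : ContDiff ℝ (⊤ : ℕ∞) v)
    (hw : ContDiff ℝ (⊤ : ℕ∞) w) (hus : HasCompactSupport u) :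
    trilinearForm u v w = ∑ i, ∑ j, ∫ x, u x i * fderiv ℝ (fun y => v y j) x
      (EuclideanSpace.single i 1) * w x j := by
  rw [trilinearForm]
  rw [integral_finset_sum _ (fun i _ => integrable_finset_sum _
    (fun j _ => term_integrable hu hv hw hus i j))]
  exact Finset.sum_congr rfl fun i _ => integral_finset_sum _
    (fun j _ => term_integrable hu hv hw hus i j)

end Aux2

section Aux3
variable {d : ℕ}
local notation "E" => EuclideanSpace ℝ (Fin d)

lemma tf_swap {u v w : E → E} (hu : ContDiff ℝ (⊤ : ℕ∞) u) (hv : ContDiff ℝ (⊤ : ℕ∞) v) (hw : ContDiff ℝ (⊤ : ℕ∞) w)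
    (hus : HasCompactSupport u) (hvs : HasCompactSupport v) (hws : HasCompactSupport w)
    (hdiv : ∀ x, ∑ i, fderiv ℝ (fun y => u y i) x (EuclideanSpace.single i 1) = 0) :
    trilinearForm u v w = - trilinearForm u w v := by
  classical
  have hkey : ∀ j : Fin d,
      ((∑ i, ∫ x, u x i * fderiv ℝ (fun y => v y j) x (EuclideanSpace.single i 1) * w x j)
       + ∑ i, ∫ x, u x i * fderiv ℝ (fun y => w y j) x (EuclideanSpace.single i 1) * v x j) = 0 := by
    intro j
    set g : E → ℝ := fun x => v x j * w x j with hgdef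
    have hgc : ContDiff ℝ (⊤ : ℕ∞) g := (comp_contDiff hv j).mul (comp_contDiff hw j)
    have hgs : HasCompactSupport g := (comp_support hvs j).mul_right
    have step1 : ∀ i : Fin d,
        (∫ x, u x i * fderiv ℝ (fun y => v y j) x (EuclideanSpace.single i 1) * w x j)
        + (∫ x, u x i * fderiv ℝ (fun y => w y j) x (EuclideanSpace.single i 1) * v x j)
        = ∫ x, fderiv ℝ g x (EuclideanSpace.single i 1) * u x i := by
      intro i
      rw [← integral_add (term_integrable hu hv hw hus i j) (term_integrable hu hw hv hus i j)]
      apply integral_congr_ae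
      filter_upwards with x
      have hdm : fderiv ℝ g x = v x j • fderiv ℝ (fun y => w y j) x
          + w x j • fderiv ℝ (fun y => v y j) x :=
        fderiv_fun_mul (((comp_contDiff hv j).differentiable (by simp)) x)
          (((comp_contDiff hw j).differentiable (by simp)) x)
      rw [hdm]
      simp only [ContinuousLinearMap.add_apply, ContinuousLinearMap.coe_smul',
        Pi.smul_apply, smul_eq_mul]
      ring
    have step2 : ∀ i : Fin d,
        (∫ x, fderiv ℝ g x (EuclideanSpace.single i 1) * u x i)
        = - ∫ x, fderiv ℝ (fun y => u y i) x (EuclideanSpace.single i 1) * g x := by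
      intro i
      have h := byparts (comp_contDiff hu i) hgc (comp_support hus i) hgs
        (EuclideanSpace.single i 1)
      linarith
    rw [← Finset.sum_add_distrib]
    have : ∀ i ∈ (Finset.univ : Finset (Fin d)),
        ((∫ x, u x i * fderiv ℝ (fun y => v y j) x (EuclideanSpace.single i 1) * w x j)
        + ∫ x, u x i * fderiv ℝ (fun y => w y j) x (EuclideanSpace.single i 1) * v x j)
        = - ∫ x, fderiv ℝ (fun y => u y i) x (EuclideanSpace.single i 1) * g x := by
      intro i _
      rw [step1 i, step2 i]
    rw [Finset.sum_congr rfl this, Finset.sum_neg_distrib,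
      ← integral_finset_sum (f := fun i x => fderiv ℝ (fun y => u y i) x (EuclideanSpace.single i 1) * g x) _ (fun i _ => Continuous.integrable_of_hasCompactSupport
        ((deriv_cont hu i _).mul hgc.continuous) ((deriv_support hus i _).mul_right))]
    have hz : ∀ x : E, (∑ i, fderiv ℝ (fun y => u y i) x (EuclideanSpace.single i 1) * g x) = 0 := by
      intro x
      rw [← Finset.sum_mul, hdiv x, zero_mul]
    simp only [hz, integral_zero, neg_zero]
  have h1 := tf_repr hu hv hw hus
  have h2 := tf_repr hu hw hv hus
  have hsum : trilinearForm u v w + trilinearForm u w v = 0 := by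
    rw [h1, h2]
    rw [Finset.sum_comm (f := fun i j => ∫ x, u x i * fderiv ℝ (fun y => v y j) x
      (EuclideanSpace.single i 1) * w x j)]
    rw [Finset.sum_comm (f := fun i j => ∫ x, u x i * fderiv ℝ (fun y => w y j) x
      (EuclideanSpace.single i 1) * v x j)]
    rw [← Finset.sum_add_distrib]
    exact Finset.sum_eq_zero fun j _ => hkey j
  linarith

end Aux3

lemma pointwise_cs {n : ℕ} (a : Fin n → ℝ) (A : Fin n → Fin n → ℝ) :
    |∑ i, ∑ j, a i * A i j * a j| ≤ (∑ i, a i ^ 2) * Real.sqrt (∑ i, ∑ j, A i j ^ 2) := by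
  classical
  set c : Fin n → ℝ := fun j => ∑ i, a i * A i j with hc
  have hS : (∑ i, ∑ j, a i * A i j * a j) = ∑ j, c j * a j := by
    rw [Finset.sum_comm]
    exact Finset.sum_congr rfl fun j _ => by rw [hc, Finset.sum_mul]
  have h1 : (∑ j, c j * a j) ^ 2 ≤ (∑ j, c j ^ 2) * ∑ j, a j ^ 2 :=
    Finset.sum_mul_sq_le_sq_mul_sq _ _ _
  have h2 : (∑ j, c j ^ 2) ≤ (∑ i, a i ^ 2) * (∑ i, ∑ j, A i j ^ 2) := by
    have hj : ∀ j, c j ^ 2 ≤ (∑ i, a i ^ 2) * (∑ i, A i j ^ 2) := fun j =>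
      Finset.sum_mul_sq_le_sq_mul_sq _ _ _
    calc (∑ j, c j ^ 2) ≤ ∑ j, (∑ i, a i ^ 2) * (∑ i, A i j ^ 2) :=
          Finset.sum_le_sum fun j _ => hj j
      _ = (∑ i, a i ^ 2) * (∑ j, ∑ i, A i j ^ 2) := by rw [← Finset.mul_sum]
      _ = (∑ i, a i ^ 2) * (∑ i, ∑ j, A i j ^ 2) := by rw [Finset.sum_comm]
  have ha2 : (0:ℝ) ≤ ∑ i, a i ^ 2 := Finset.sum_nonneg fun i _ => sq_nonneg _
  have hA2 : (0:ℝ) ≤ ∑ i, ∑ j, A i j ^ 2 :=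
    Finset.sum_nonneg fun i _ => Finset.sum_nonneg fun j _ => sq_nonneg _
  rw [hS, ← Real.sqrt_sq_eq_abs]
  calc Real.sqrt ((∑ j, c j * a j) ^ 2)
      ≤ Real.sqrt (((∑ i, a i ^ 2) * (∑ i, ∑ j, A i j ^ 2)) * (∑ j, a j ^ 2)) := by
        apply Real.sqrt_le_sqrt
        exact h1.trans (by nlinarith [Finset.sum_nonneg (fun j (_ : j ∈ Finset.univ) => sq_nonneg (a j))])
    _ = (∑ i, a i ^ 2) * Real.sqrt (∑ i, ∑ j, A i j ^ 2) := by
        rw [Real.sqrt_mul (mul_nonneg ha2 hA2), Real.sqrt_mul ha2, mul_right_comm,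
          Real.mul_self_sqrt ha2]

/-- For `r > 3`, `‖B(u)‖_{V'} ≤ ‖u‖_{L^{r+1}}^{(r+1)/(r-1)} ‖u‖_H^{(r-3)/(r-1)}`,
expressed via `⟨B(u),v⟩ = b(u,u,v)` as a bound on `|b(u,u,v)|` for every `v ∈ V`. -/
theorem convective_term_dual_bound {d : ℕ} (hd : d = 2 ∨ d = 3)
    (r : ℝ) (hr : 3 < r)
    (u v : EuclideanSpace ℝ (Fin d) → EuclideanSpace ℝ (Fin d))
    (hu : ContDiff ℝ (⊤ : ℕ∞) u) (hv : ContDiff ℝ (⊤ : ℕ∞) v)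
    (hus : HasCompactSupport u) (hvs : HasCompactSupport v)
    (hdiv : ∀ x, ∑ i, fderiv ℝ (fun y => u y i) x (EuclideanSpace.single i 1) = 0) :
    |trilinearForm u u v| ≤
      (eLpNorm u (ENNReal.ofReal (r + 1)) volume).toReal ^ ((r + 1) / (r - 1)) *
        (eLpNorm u 2 volume).toReal ^ ((r - 3) / (r - 1)) * VNorm v := by
  classical
  have hr1 : (0:ℝ) < r - 1 := by linarith
  have hr3 : (0:ℝ) < r - 3 := by linarith
  -- swap using skew-symmetry
  have hswap := tf_swap hu hu hv hus hus hvs hdiv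
  rw [hswap, abs_neg]
  -- abbreviations
  set G : EuclideanSpace ℝ (Fin d) → ℝ := fun x => ∑ i, ∑ j,
    (fderiv ℝ (fun y => v y j) x (EuclideanSpace.single i 1)) ^ 2 with hGdef
  set Q : EuclideanSpace ℝ (Fin d) → ℝ := fun x => ∑ i, (u x i) ^ 2 with hQdef
  have hGnn : ∀ x, 0 ≤ G x := fun x =>
    Finset.sum_nonneg fun i _ => Finset.sum_nonneg fun j _ => sq_nonneg _
  have hQnn : ∀ x, 0 ≤ Q x := fun x => Finset.sum_nonneg fun i _ => sq_nonneg _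
  have hGcont : Continuous G := continuous_finset_sum _ fun i _ =>
    continuous_finset_sum _ fun j _ => (deriv_cont hv j _).pow 2
  have hGsupp : HasCompactSupport G := hcs_sum _ _ fun i => hcs_sum _ _ fun j =>
    (deriv_support hvs j _).comp_left (g := fun t : ℝ => t ^ 2) (by simp)
  have hQcont : Continuous Q := continuous_finset_sum _ fun i _ =>
    ((comp_contDiff hu i).continuous).pow 2
  have hQsupp : HasCompactSupport Q := hcs_sum _ _ fun i =>
    (comp_support hus i).comp_left (g := fun t : ℝ => t ^ 2) (by simp)
  have hQN : ∀ x, Q x = ‖u x‖ ^ (2:ℝ) := by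
    intro x
    rw [show ((2:ℝ)) = ((2:ℕ):ℝ) by norm_num, Real.rpow_natCast, EuclideanSpace.norm_eq,
      Real.sq_sqrt (Finset.sum_nonneg fun i _ => by positivity)]
    exact Finset.sum_congr rfl fun i _ => by rw [Real.norm_eq_abs, sq_abs]
  -- step 1 : |b(u,v,u)| ≤ ∫ Q √G
  have step1 : |trilinearForm u v u| ≤ ∫ x, Q x * Real.sqrt (G x) := by
    have hint : Integrable (fun x => ∑ i, ∑ j, u x i *
        fderiv ℝ (fun y => v y j) x (EuclideanSpace.single i 1) * u x j) volume :=
      integrable_finset_sum _ fun i _ => integrable_finset_sum _ fun j _ =>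
        term_integrable hu hv hu hus i j
    have hint2 : Integrable (fun x => Q x * Real.sqrt (G x)) volume :=
      Continuous.integrable_of_hasCompactSupport
        (hQcont.mul (Real.continuous_sqrt.comp hGcont)) hQsupp.mul_right
    rw [trilinearForm]
    have habs := norm_integral_le_integral_norm (μ := volume)
      (f := fun x => ∑ i, ∑ j, u x i *
        fderiv ℝ (fun y => v y j) x (EuclideanSpace.single i 1) * u x j)
    rw [Real.norm_eq_abs] at habs
    refine habs.trans ?_
    refine (integral_mono hint.norm hint2 fun x => ?_)
    rw [Real.norm_eq_abs]
    exact pointwise_cs (fun i => u x i)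
      (fun i j => fderiv ℝ (fun y => v y j) x (EuclideanSpace.single i 1))
  -- step 2 : Hölder with exponents (2,2)
  have conj2 : Real.HolderConjugate 2 2 := Real.holderConjugate_iff.mpr ⟨one_lt_two, by norm_num⟩
  have mQ : MemLp Q (ENNReal.ofReal 2) volume := hQcont.memLp_of_hasCompactSupport hQsupp
  have msG : MemLp (fun x => Real.sqrt (G x)) (ENNReal.ofReal 2) volume :=
    (Real.continuous_sqrt.comp hGcont).memLp_of_hasCompactSupport
      (hGsupp.comp_left (g := Real.sqrt) Real.sqrt_zero)
  have step2 := integral_mul_le_Lp_mul_Lq_of_nonneg conj2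
    (Filter.Eventually.of_forall hQnn)
    (Filter.Eventually.of_forall fun x => Real.sqrt_nonneg _) mQ msG
  have hG2 : ∀ x, Real.sqrt (G x) ^ (2:ℝ) = G x := fun x => by
    rw [show ((2:ℝ)) = ((2:ℕ):ℝ) by norm_num, Real.rpow_natCast, Real.sq_sqrt (hGnn x)]
  have hQ2 : ∀ x, Q x ^ (2:ℝ) = ‖u x‖ ^ (4:ℝ) := fun x => by
    rw [hQN x, ← Real.rpow_mul (norm_nonneg _)]; norm_num
  simp only [hG2, hQ2] at step2
  -- step 3 : interpolation of L⁴ between L² and L^{r+1}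
  set a : ℝ := 2*(r+1)/(r-1) with hadef
  set b : ℝ := 2*(r-3)/(r-1) with hbdef
  have ha : 0 < a := by rw [hadef]; positivity
  have hb : 0 < b := by rw [hbdef]; positivity
  have hab : a + b = 4 := by rw [hadef, hbdef]; field_simp; ring
  have conj : Real.HolderConjugate ((r-1)/2) ((r-1)/(r-3)) := by
    rw [Real.holderConjugate_iff]
    constructor
    · rw [lt_div_iff₀ (by norm_num : (0:ℝ) < 2)]; linarith
    · rw [inv_div, inv_div, ← add_div, div_eq_one_iff_eq hr1.ne']; ring
  have mfa : MemLp (fun x => ‖u x‖ ^ a) (ENNReal.ofReal ((r-1)/2)) volume :=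
    (hu.continuous.norm.rpow_const (fun x => Or.inr ha.le)).memLp_of_hasCompactSupport
      (hus.comp_left (g := fun z : EuclideanSpace ℝ (Fin d) => ‖z‖ ^ a)
        (by simp [Real.zero_rpow ha.ne']))
  have mfb : MemLp (fun x => ‖u x‖ ^ b) (ENNReal.ofReal ((r-1)/(r-3))) volume :=
    (hu.continuous.norm.rpow_const (fun x => Or.inr hb.le)).memLp_of_hasCompactSupport
      (hus.comp_left (g := fun z : EuclideanSpace ℝ (Fin d) => ‖z‖ ^ b)
        (by simp [Real.zero_rpow hb.ne']))
  have step3 := integral_mul_le_Lp_mul_Lq_of_nonneg conj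
    (Filter.Eventually.of_forall fun x => Real.rpow_nonneg (norm_nonneg _) _)
    (Filter.Eventually.of_forall fun x => Real.rpow_nonneg (norm_nonneg _) _) mfa mfb
  have hps : ∀ x, ‖u x‖ ^ a * ‖u x‖ ^ b = ‖u x‖ ^ (4:ℝ) := fun x => by
    rw [← Real.rpow_add' (norm_nonneg _) (by rw [hab]; norm_num), hab]
  have hpa : ∀ x, (‖u x‖ ^ a) ^ ((r-1)/2) = ‖u x‖ ^ (r+1) := fun x => by
    rw [← Real.rpow_mul (norm_nonneg _),
      show a * ((r-1)/2) = r+1 by rw [hadef]; field_simp]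
  have hpb : ∀ x, (‖u x‖ ^ b) ^ ((r-1)/(r-3)) = ‖u x‖ ^ (2:ℝ) := fun x => by
    rw [← Real.rpow_mul (norm_nonneg _),
      show b * ((r-1)/(r-3)) = 2 by rw [hbdef]; field_simp]
  simp only [hps, hpa, hpb] at step3
  -- notation for the integrals
  set IA : ℝ := ∫ x, ‖u x‖ ^ (r+1) with hIA
  set IB : ℝ := ∫ x, ‖u x‖ ^ (2:ℝ) with hIB
  set I4 : ℝ := ∫ x, ‖u x‖ ^ (4:ℝ) with hI4
  set IG : ℝ := ∫ x, G x with hIG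
  have hIAnn : 0 ≤ IA := integral_nonneg fun x => Real.rpow_nonneg (norm_nonneg _) _
  have hIBnn : 0 ≤ IB := integral_nonneg fun x => Real.rpow_nonneg (norm_nonneg _) _
  have hI4nn : 0 ≤ I4 := integral_nonneg fun x => Real.rpow_nonneg (norm_nonneg _) _
  have hIGnn : 0 ≤ IG := integral_nonneg fun x => hGnn x
  -- VNorm v = IG ^ (1/2)
  have hVN : VNorm v = IG ^ ((1:ℝ)/2) := by
    rw [VNorm, ← Real.sqrt_eq_rpow, hIG]
  have hVNnn : 0 ≤ VNorm v := Real.sqrt_nonneg _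
  -- assemble the left side chain
  have chain : |trilinearForm u v u| ≤
      IA ^ ((1:ℝ)/(r-1)) * IB ^ ((r-3)/(2*(r-1))) * VNorm v := by
    refine step1.trans (step2.trans ?_)
    rw [hVN]
    have h4 : I4 ^ ((1:ℝ)/2) ≤
        (IA ^ ((1:ℝ)/((r-1)/2)) * IB ^ ((1:ℝ)/((r-1)/(r-3)))) ^ ((1:ℝ)/2) :=
      Real.rpow_le_rpow hI4nn step3 (by norm_num)
    have h5 : (IA ^ ((1:ℝ)/((r-1)/2)) * IB ^ ((1:ℝ)/((r-1)/(r-3)))) ^ ((1:ℝ)/2)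
        = IA ^ ((1:ℝ)/(r-1)) * IB ^ ((r-3)/(2*(r-1))) := by
      rw [Real.mul_rpow (Real.rpow_nonneg hIAnn _) (Real.rpow_nonneg hIBnn _),
        ← Real.rpow_mul hIAnn, ← Real.rpow_mul hIBnn,
        show (1:ℝ)/((r-1)/2) * (1/2) = 1/(r-1) by field_simp,
        show (1:ℝ)/((r-1)/(r-3)) * (1/2) = (r-3)/(2*(r-1)) by rw [one_div_div, div_mul_div_comm, mul_one, mul_comm (r-1) 2]]
    exact mul_le_mul_of_nonneg_right (h4.trans_eq h5) (Real.rpow_nonneg hIGnn _)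
  -- rewrite the right-hand side
  have eA : (eLpNorm u (ENNReal.ofReal (r + 1)) volume).toReal = IA ^ (r+1)⁻¹ := by
    rw [(hu.continuous.memLp_of_hasCompactSupport hus).eLpNorm_eq_integral_rpow_norm
      (by simp [ENNReal.ofReal_eq_zero]; linarith) ENNReal.ofReal_ne_top,
      ENNReal.toReal_ofReal (by linarith : (0:ℝ) ≤ r+1),
      ENNReal.toReal_ofReal (Real.rpow_nonneg (integral_nonneg fun x =>
        Real.rpow_nonneg (norm_nonneg _) _) _)]
  have eB : (eLpNorm u 2 volume).toReal = IB ^ (2:ℝ)⁻¹ := by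
    rw [(hu.continuous.memLp_of_hasCompactSupport hus).eLpNorm_eq_integral_rpow_norm
      (by norm_num) (by norm_num),
      show ((2:ℝ≥0∞).toReal) = (2:ℝ) by norm_num,
      ENNReal.toReal_ofReal (Real.rpow_nonneg (integral_nonneg fun x =>
        Real.rpow_nonneg (norm_nonneg _) _) _)]
  rw [eA, eB, ← Real.rpow_mul hIAnn, ← Real.rpow_mul hIBnn,
    show (r+1)⁻¹ * ((r+1)/(r-1)) = 1/(r-1) by field_simp,
    show (2:ℝ)⁻¹ * ((r-3)/(r-1)) = (r-3)/(2*(r-1)) by rw [← one_div, div_mul_div_comm, one_mul]]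
  exact chain
end

section
/- For r > 3, if u ∈ L²(0,T;H) ∩ L^{r+1}(0,T; L^{r+1}), then B(u) ∈ L²(0,T; V') and ∫₀^T ‖B(u(t))‖²_{V'} dt ≤ ‖u‖_{L^{r+1}(0,T;L^{r+1})}^{2(r+1)/(r−1)} ‖u‖_{L²(0,T;H)}^{2(r−3)/(r−1)}. -/
open MeasureTheory ENNReal Set

/-!
Squaring the pointwise bound gives `‖B(u)‖²_{V'} ≤ ‖u‖_{L^{r+1}}^a ‖u‖_H^b` with
`a = 2(r+1)/(r-1)` and `b = 2(r-3)/(r-1)`. Since `a/(r+1) + b/2 = 1`, Hölder's inequality in time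
with the conjugate exponents `(r+1)/a` and `2/b` bounds the time integral by
`‖u‖_{L^{r+1}(L^{r+1})}^a ‖u‖_{L²(H)}^b`.
-/

theorem ENNReal.lintegral_rpow_mul_rpow_le {α : Type*} [MeasurableSpace α] (μ : Measure α)
    {f g : α → ℝ≥0∞} (hf : AEMeasurable f μ) (hg : AEMeasurable g μ) {a b p q : ℝ}
    (ha : 0 < a) (hb : 0 < b) (hp : 0 < p) (hq : 0 < q) (habpq : a / p + b / q = 1) :
    ∫⁻ x, f x ^ a * g x ^ b ∂μ ≤
      ((∫⁻ x, f x ^ p ∂μ) ^ (1 / p)) ^ a * ((∫⁻ x, g x ^ q ∂μ) ^ (1 / q)) ^ b := by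
  have hconj : (a / p)⁻¹.HolderConjugate (b / q)⁻¹ :=
    .inv_inv (div_pos ha hp) (div_pos hb hq) habpq
  calc ∫⁻ x, f x ^ a * g x ^ b ∂μ
      ≤ (∫⁻ x, (f x ^ a) ^ (a / p)⁻¹ ∂μ) ^ (1 / (a / p)⁻¹) *
          (∫⁻ x, (g x ^ b) ^ (b / q)⁻¹ ∂μ) ^ (1 / (b / q)⁻¹) :=
        ENNReal.lintegral_mul_le_Lp_mul_Lq μ hconj (hf.pow_const a) (hg.pow_const b)
    _ = ((∫⁻ x, f x ^ p ∂μ) ^ (1 / p)) ^ a * ((∫⁻ x, g x ^ q ∂μ) ^ (1 / q)) ^ b := by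
        simp only [← ENNReal.rpow_mul, inv_div, one_div_div, one_div_mul_eq_div,
          mul_div_cancel₀ _ ha.ne', mul_div_cancel₀ _ hb.ne']

/- `uLr t = ‖u(t)‖_{L^{r+1}}`, `uH t = ‖u(t)‖_H`;
`hbound` is the pointwise estimate on `B(u)`. -/
theorem Bu_L2_in_time_high_r_general {V : Type*} [NormedAddCommGroup V] [NormedSpace ℝ V]
    (r T : ℝ) (hr : 3 < r)
    (uLr uH : ℝ → ℝ≥0∞) (Bu : ℝ → V →L[ℝ] ℝ)
    (hmLr : Measurable uLr) (hmH : Measurable uH)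
    (hbound : ∀ t, (‖Bu t‖₊ : ℝ≥0∞) ≤
      uLr t ^ ((r + 1) / (r - 1)) * uH t ^ ((r - 3) / (r - 1)))
    (huLr : ∫⁻ t in Ioc 0 T, uLr t ^ (r + 1) < ⊤)
    (huH : ∫⁻ t in Ioc 0 T, uH t ^ (2:ℝ) < ⊤) :
    (∫⁻ t in Ioc 0 T, (‖Bu t‖₊ : ℝ≥0∞) ^ (2:ℝ)) ≤
      ((∫⁻ t in Ioc 0 T, uLr t ^ (r + 1)) ^ ((1:ℝ) / (r + 1))) ^ (2 * (r + 1) / (r - 1)) *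
        ((∫⁻ t in Ioc 0 T, uH t ^ (2:ℝ)) ^ ((1:ℝ) / 2)) ^ (2 * (r - 3) / (r - 1)) ∧
      (∫⁻ t in Ioc 0 T, (‖Bu t‖₊ : ℝ≥0∞) ^ (2:ℝ)) < ⊤ := by
  have hr1 : 0 < r - 1 := by linarith
  have hsq : ∀ t, (‖Bu t‖₊ : ℝ≥0∞) ^ (2:ℝ) ≤
      uLr t ^ (2 * (r + 1) / (r - 1)) * uH t ^ (2 * (r - 3) / (r - 1)) := fun t => by
    refine (ENNReal.rpow_le_rpow (hbound t) zero_le_two).trans_eq ?_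
    rw [ENNReal.mul_rpow_of_nonneg _ _ zero_le_two, ← ENNReal.rpow_mul, ← ENNReal.rpow_mul]
    congr 2 <;> ring
  have hexp : 2 * (r + 1) / (r - 1) / (r + 1) + 2 * (r - 3) / (r - 1) / 2 = 1 := by
    field_simp; ring
  have hle := (lintegral_mono hsq).trans <|
    ENNReal.lintegral_rpow_mul_rpow_le (volume.restrict (Ioc 0 T)) hmLr.aemeasurable
      hmH.aemeasurable (by positivity) (by bound) (by linarith) two_pos hexp
  refine ⟨hle, hle.trans_lt (ENNReal.mul_lt_top ?_ ?_)⟩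
  · exact rpow_lt_top_of_nonneg (by bound) (rpow_lt_top_of_nonneg (by bound) huLr.ne).ne
  · exact rpow_lt_top_of_nonneg (by bound) (rpow_lt_top_of_nonneg (by bound) huH.ne).ne

/-- For `r > 3`, if `u ∈ L²(0,T;H) ∩ L^{r+1}(0,T;L^{r+1})`, then `B(u) ∈ L²(0,T;V')` and
`∫₀ᵀ ‖B(u(t))‖²_{V'} dt ≤ ‖u‖_{L^{r+1}(0,T;L^{r+1})}^{2(r+1)/(r-1)} ‖u‖_{L²(0,T;H)}^{2(r-3)/(r-1)}`.
Here `uLr t = ‖u(t)‖_{L^{r+1}}`, `uH t = ‖u(t)‖_H`, and the pointwise estimate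
`‖B(u)‖_{V'} ≤ ‖u‖_{L^{r+1}}^{(r+1)/(r-1)} ‖u‖_H^{(r-3)/(r-1)}` is the defining bound. -/
theorem Bu_L2_in_time_high_r {V : Type*} [NormedAddCommGroup V] [NormedSpace ℝ V]
    (r T : ℝ) (hr : 3 < r) (hT : 0 < T)
    (uLr uH : ℝ → ℝ≥0∞) (Bu : ℝ → V →L[ℝ] ℝ)
    (hmLr : Measurable uLr) (hmH : Measurable uH)
    (hbound : ∀ t, (‖Bu t‖₊ : ℝ≥0∞) ≤
      uLr t ^ ((r + 1) / (r - 1)) * uH t ^ ((r - 3) / (r - 1)))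
    (huLr : ∫⁻ t in Ioc 0 T, uLr t ^ (r + 1) < ⊤)
    (huH : ∫⁻ t in Ioc 0 T, uH t ^ (2:ℝ) < ⊤) :
    (∫⁻ t in Ioc 0 T, (‖Bu t‖₊ : ℝ≥0∞) ^ (2:ℝ)) ≤
      ((∫⁻ t in Ioc 0 T, uLr t ^ (r + 1)) ^ ((1:ℝ) / (r + 1))) ^ (2 * (r + 1) / (r - 1)) *
        ((∫⁻ t in Ioc 0 T, uH t ^ (2:ℝ)) ^ ((1:ℝ) / 2)) ^ (2 * (r - 3) / (r - 1)) ∧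
      (∫⁻ t in Ioc 0 T, (‖Bu t‖₊ : ℝ≥0∞) ^ (2:ℝ)) < ⊤ :=
  Bu_L2_in_time_high_r_general r T hr uLr uH Bu hmLr hmH hbound huLr huH
end

section
/- For r ≥ 2 and u₁, u₂ ∈ L^{r+1}(𝒪), one has ‖u₁ − u₂‖^{r+1}_{L^{r+1}} ≤ 2^{r−2} ‖|u₁|^{(r−1)/2}(u₁−u₂)‖²_{L²} + 2^{r−2} ‖|u₂|^{(r−1)/2}(u₁−u₂)‖²_{L²}; for 1 ≤ r ≤ 2 the same holds with the constants 2^{r−2} replaced by 1. -/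
open MeasureTheory

/-! Since `r + 1 = (r - 1) + 2`, it suffices to bound `‖u₁ - u₂‖ ^ (r - 1)` pointwise by
`c (‖u₁‖ ^ (r - 1) + ‖u₂‖ ^ (r - 1))`. The triangle inequality gives `‖u₁ - u₂‖ ≤ ‖u₁‖ + ‖u₂‖`,
and `(a + b) ^ p ≤ 2 ^ (p - 1) (a ^ p + b ^ p)` for `p ≥ 1` (convexity) while
`(a + b) ^ p ≤ a ^ p + b ^ p` for `0 ≤ p ≤ 1` (subadditivity); then integrate. -/

section Pointwise

variable {E : Type*} [SeminormedAddCommGroup E]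

theorem norm_sub_rpow_le_two_rpow_mul (a b : E) {p : ℝ} (hp : 1 ≤ p) :
    ‖a - b‖ ^ p ≤ (2 : ℝ) ^ (p - 1) * (‖a‖ ^ p + ‖b‖ ^ p) := by
  calc ‖a - b‖ ^ p ≤ (‖a‖ + ‖b‖) ^ p :=
        Real.rpow_le_rpow (norm_nonneg _) (norm_sub_le a b) (by linarith)
    _ ≤ (2 : ℝ) ^ (p - 1) * (‖a‖ ^ p + ‖b‖ ^ p) := by
        exact_mod_cast NNReal.rpow_add_le_mul_rpow_add_rpow ‖a‖₊ ‖b‖₊ hp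

theorem norm_sub_rpow_le_add (a b : E) {p : ℝ} (hp₀ : 0 ≤ p) (hp₁ : p ≤ 1) :
    ‖a - b‖ ^ p ≤ ‖a‖ ^ p + ‖b‖ ^ p := by
  calc ‖a - b‖ ^ p ≤ (‖a‖ + ‖b‖) ^ p :=
        Real.rpow_le_rpow (norm_nonneg _) (norm_sub_le a b) hp₀
    _ ≤ ‖a‖ ^ p + ‖b‖ ^ p := by
        exact_mod_cast NNReal.rpow_add_le_add_rpow ‖a‖₊ ‖b‖₊ hp₀ hp₁

theorem norm_sub_rpow_add_two_le (a b : E) {p c : ℝ} (hp : 0 ≤ p)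
    (h : ‖a - b‖ ^ p ≤ c * (‖a‖ ^ p + ‖b‖ ^ p)) :
    ‖a - b‖ ^ (p + 2) ≤ c * (‖a‖ ^ p * ‖a - b‖ ^ 2) + c * (‖b‖ ^ p * ‖a - b‖ ^ 2) := by
  rw [← Nat.cast_ofNat, Real.rpow_add_natCast' (norm_nonneg _) (by positivity)]
  calc ‖a - b‖ ^ p * ‖a - b‖ ^ (2 : ℕ) ≤ c * (‖a‖ ^ p + ‖b‖ ^ p) * ‖a - b‖ ^ (2 : ℕ) :=
        mul_le_mul_of_nonneg_right h (by positivity)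
    _ = _ := by ring

end Pointwise

theorem integral_le_const_mul_add_of_le {α : Type*} [MeasurableSpace α] {μ : Measure α}
    {f g h : α → ℝ} (c : ℝ) (hf : Integrable f μ) (hg : Integrable g μ) (hh : Integrable h μ)
    (hle : ∀ x, f x ≤ c * g x + c * h x) :
    ∫ x, f x ∂μ ≤ c * ∫ x, g x ∂μ + c * ∫ x, h x ∂μ := by
  calc ∫ x, f x ∂μ ≤ ∫ x, (c * g x + c * h x) ∂μ :=
        integral_mono hf ((hg.const_mul c).add (hh.const_mul c)) hle
    _ = c * ∫ x, g x ∂μ + c * ∫ x, h x ∂μ := by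
        rw [integral_add (hg.const_mul c) (hh.const_mul c), integral_const_mul, integral_const_mul]

/-- For `r ≥ 2`:
`‖u₁-u₂‖^{r+1}_{L^{r+1}} ≤ 2^{r-2}‖|u₁|^{(r-1)/2}(u₁-u₂)‖²_{L²} + 2^{r-2}‖|u₂|^{(r-1)/2}(u₁-u₂)‖²_{L²}`,
and for `1 ≤ r ≤ 2` the same holds with the constants `2^{r-2}` replaced by `1`. -/
theorem Lrp1_difference_bound
    {d : ℕ} (O : Set (EuclideanSpace ℝ (Fin d))) (r : ℝ) (hr : 1 ≤ r)
    (u₁ u₂ : EuclideanSpace ℝ (Fin d) → EuclideanSpace ℝ (Fin d))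
    (hint : Integrable (fun x => ‖u₁ x - u₂ x‖ ^ (r + 1)) (volume.restrict O))
    (hint1 : Integrable (fun x => ‖u₁ x‖ ^ (r - 1) * ‖u₁ x - u₂ x‖ ^ 2)
      (volume.restrict O))
    (hint2 : Integrable (fun x => ‖u₂ x‖ ^ (r - 1) * ‖u₁ x - u₂ x‖ ^ 2)
      (volume.restrict O)) :
    (2 ≤ r →
      (∫ x, ‖u₁ x - u₂ x‖ ^ (r + 1) ∂(volume.restrict O)) ≤
        (2:ℝ) ^ (r - 2) *
            (∫ x, ‖u₁ x‖ ^ (r - 1) * ‖u₁ x - u₂ x‖ ^ 2 ∂(volume.restrict O)) +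
          (2:ℝ) ^ (r - 2) *
            (∫ x, ‖u₂ x‖ ^ (r - 1) * ‖u₁ x - u₂ x‖ ^ 2 ∂(volume.restrict O))) ∧
    (r ≤ 2 →
      (∫ x, ‖u₁ x - u₂ x‖ ^ (r + 1) ∂(volume.restrict O)) ≤
        (∫ x, ‖u₁ x‖ ^ (r - 1) * ‖u₁ x - u₂ x‖ ^ 2 ∂(volume.restrict O)) +
          (∫ x, ‖u₂ x‖ ^ (r - 1) * ‖u₁ x - u₂ x‖ ^ 2 ∂(volume.restrict O))) := by
  have hexp : r + 1 = r - 1 + 2 := by ring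
  constructor
  · intro hr2
    refine integral_le_const_mul_add_of_le _ hint hint1 hint2 fun x => ?_
    rw [hexp, show r - 2 = r - 1 - 1 by ring]
    exact norm_sub_rpow_add_two_le _ _ (by linarith)
      (norm_sub_rpow_le_two_rpow_mul _ _ (by linarith))
  · intro hr2
    have key := integral_le_const_mul_add_of_le 1 hint hint1 hint2 fun x => by
      rw [hexp]
      exact norm_sub_rpow_add_two_le _ _ (by linarith)
        ((norm_sub_rpow_le_add _ _ (by linarith) (by linarith)).trans_eq (one_mul _).symm)
    simpa only [one_mul] using key
end

section
/- Let d = r = 3 and assume 2βμ ≥ 1. Then the operator G(u) = μAu + B(u) + αu + βC(u) is monotone: ⟨G(u₁) − G(u₂), u₁ − u₂⟩ ≥ 0 for all u₁, u₂ ∈ V ∩ L⁴. -/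
open MeasureTheory

/-- `|∇w(x)|² = Σ_{i,j} (∂ᵢwⱼ(x))²`. -/
noncomputable def gradSq {d : ℕ}
    (w : EuclideanSpace ℝ (Fin d) → EuclideanSpace ℝ (Fin d))
    (x : EuclideanSpace ℝ (Fin d)) : ℝ :=
  ∑ i, ∑ j, (fderiv ℝ (fun y => w y j) x (EuclideanSpace.single i 1)) ^ 2

namespace GMonoAux

abbrev E3 := EuclideanSpace ℝ (Fin 3)
notation "SM" => ((⊤:ℕ∞) : WithTop ℕ∞)

noncomputable def Dc (f : E3 → E3) (i j : Fin 3) (x : E3) : ℝ :=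
  fderiv ℝ (fun y => f y j) x (EuclideanSpace.single i 1)

lemma one_le_inf : SM ≠ 0 := by simp

lemma compCD {f : E3 → E3} (hf : ContDiff ℝ SM f) (j : Fin 3) :
    ContDiff ℝ SM (fun y => f y j) := contDiff_euclidean.mp hf j

lemma compDiff {f : E3 → E3} (hf : ContDiff ℝ SM f) (j : Fin 3) :
    Differentiable ℝ (fun y => f y j) := (compCD hf j).differentiable one_le_inf

lemma Dc_cont {f : E3 → E3} (hf : ContDiff ℝ SM f) (i j : Fin 3) :
    Continuous (Dc f i j) := by
  have h := (compCD hf j).continuous_fderiv_apply one_le_inf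
  exact h.comp (continuous_id.prodMk continuous_const)

lemma comp_hcs {f : E3 → E3} (hf : HasCompactSupport f) (j : Fin 3) :
    HasCompactSupport (fun y => f y j) := hf.comp_left (g := fun v : E3 => v j) rfl

lemma tsupport_comp {f : E3 → E3} (j : Fin 3) :
    tsupport (fun y => f y j) ⊆ tsupport f :=
  closure_mono (fun x hx hfx => hx (by simp [hfx, Function.mem_support]))

lemma comp_zero_off {f : E3 → E3} {x : E3} (hx : x ∉ tsupport f) (j : Fin 3) : f x j = 0 := by
  rw [image_eq_zero_of_notMem_tsupport hx]; rfl

lemma Dc_zero {f : E3 → E3} {i j : Fin 3} {x : E3} (hx : x ∉ tsupport f) :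
    Dc f i j x = 0 := by
  have h : x ∉ tsupport (fun y => f y j) := fun h => hx (tsupport_comp j h)
  have : fderiv ℝ (fun y => f y j) x = 0 := by
    by_contra h'
    exact h (support_fderiv_subset ℝ (Function.mem_support.mpr h'))
  simp [Dc, this]

lemma fderiv_cont {f : E3 → ℝ} (hf : ContDiff ℝ SM f) (v : E3) :
    Continuous (fun x => fderiv ℝ f x v) := by
  have h := hf.continuous_fderiv_apply one_le_inf
  exact h.comp (continuous_id.prodMk continuous_const)

lemma fderiv_zero_off {f : E3 → ℝ} {x : E3} (hx : x ∉ tsupport f) (v : E3) :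
    fderiv ℝ f x v = 0 := by
  have : fderiv ℝ f x = 0 := by
    by_contra h'
    exact hx (support_fderiv_subset ℝ (Function.mem_support.mpr h'))
  simp [this]

lemma integK {K : Set E3} (hK : IsCompact K) {h : E3 → ℝ} (hc : Continuous h)
    (h0 : ∀ x ∉ K, h x = 0) : Integrable h volume :=
  hc.integrable_of_hasCompactSupport (HasCompactSupport.intro hK h0)

/-- Integration by parts. -/
lemma ibp {f g : E3 → ℝ} (v : E3) (hf : ContDiff ℝ SM f) (hg : ContDiff ℝ SM g)
    (hfs : HasCompactSupport f) :
    ∫ x, f x * fderiv ℝ g x v = - ∫ x, fderiv ℝ f x v * g x := by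
  have hz : ∀ x ∉ tsupport f, f x = 0 := fun x hx => image_eq_zero_of_notMem_tsupport hx
  apply integral_mul_fderiv_eq_neg_fderiv_mul_of_integrable
  · exact integK hfs ((fderiv_cont hf v).mul hg.continuous)
      (fun x hx => by simp [fderiv_zero_off hx v])
  · exact integK hfs (hf.continuous.mul (fderiv_cont hg v))
      (fun x hx => by simp [hz x hx])
  · exact integK hfs (hf.continuous.mul hg.continuous) (fun x hx => by simp [hz x hx])
  · exact fun x _ => hf.differentiable one_le_inf x
  · exact fun x _ => hg.differentiable one_le_inf x

lemma fderiv_mul_apply {f g : E3 → ℝ} {x : E3} (hf : Differentiable ℝ f)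
    (hg : Differentiable ℝ g) (v : E3) :
    fderiv ℝ (fun y => f y * g y) x v = f x * fderiv ℝ g x v + g x * fderiv ℝ f x v := by
  rw [fderiv_fun_mul (hf x) (hg x)]
  simp [smul_eq_mul]

/-- Lemma M: `∫ Σᵢⱼ vᵢ ∂ᵢzⱼ zⱼ = 0` when `div v = 0`. -/
lemma sumM {v z : E3 → E3} (hv : ContDiff ℝ SM v) (hz : ContDiff ℝ SM z)
    (hvs : HasCompactSupport v) (hzs : HasCompactSupport z)
    (hdiv : ∀ x, ∑ i, Dc v i i x = 0) :
    ∫ x, ∑ i, ∑ j, v x i * Dc z i j x * z x j = 0 := by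
  have hinteg : ∀ i j : Fin 3, Integrable (fun x => v x i * Dc z i j x * z x j) volume := by
    intro i j
    exact integK hzs (((compCD hv i).continuous.mul (Dc_cont hz i j)).mul (compCD hz j).continuous)
      (fun x hx => by simp [comp_zero_off hx j])
  have key : ∀ i j : Fin 3, ∫ x, v x i * Dc z i j x * z x j
      = -(1/2) * ∫ x, Dc v i i x * (z x j * z x j) := by
    intro i j
    have e1 : (fun x => v x i * Dc z i j x * z x j)
        = fun x => (1/2) * (v x i * fderiv ℝ (fun y => z y j * z y j) x (EuclideanSpace.single i 1)) := by
      funext x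
      rw [fderiv_mul_apply (compDiff hz j) (compDiff hz j)]
      show _ = 1/2 * (v x i * (z x j * Dc z i j x + z x j * Dc z i j x))
      ring
    rw [e1, integral_const_mul,
      ibp (EuclideanSpace.single i 1) (compCD hv i) ((compCD hz j).mul (compCD hz j)) (comp_hcs hvs i)]
    show 1/2 * -∫ x, Dc v i i x * (z x j * z x j) = _
    ring
  rw [integral_finset_sum _ (fun i _ => integrable_finset_sum _ (fun j _ => hinteg i j))]
  have : ∀ i : Fin 3, ∫ x, ∑ j, v x i * Dc z i j x * z x j
      = ∑ j, ∫ x, v x i * Dc z i j x * z x j := fun i =>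
    integral_finset_sum _ (fun j _ => hinteg i j)
  simp only [this, key]
  rw [Finset.sum_comm]
  apply Finset.sum_eq_zero
  intro j _
  have hq : ∀ i : Fin 3, Integrable (fun x => Dc v i i x * (z x j * z x j)) volume := fun i =>
    integK hzs ((Dc_cont hv i i).mul ((compCD hz j).continuous.mul (compCD hz j).continuous))
      (fun x hx => by simp [comp_zero_off hx j])
  have : ∑ i : Fin 3, ∫ x, Dc v i i x * (z x j * z x j)
      = ∫ x, ∑ i : Fin 3, Dc v i i x * (z x j * z x j) :=
    (integral_finset_sum _ (fun i _ => hq i)).symm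
  rw [← Finset.mul_sum, this]
  have ez : ∀ x : E3, ∑ i : Fin 3, Dc v i i x * (z x j * z x j) = 0 := by
    intro x
    rw [← Finset.sum_mul, hdiv x, zero_mul]
  simp only [ez, integral_zero, mul_zero]

/-- Lemma N: move the derivative from `u` to `w`. -/
lemma sumN {w u : E3 → E3} (hw : ContDiff ℝ SM w) (hu : ContDiff ℝ SM u)
    (hws : HasCompactSupport w)
    (hdivw : ∀ x, ∑ i, Dc w i i x = 0) :
    ∫ x, ∑ i, ∑ j, w x i * Dc u i j x * w x j
      = - ∫ x, ∑ i, ∑ j, w x i * Dc w i j x * u x j := by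
  have hcw : ∀ j : Fin 3, Continuous (fun y => w y j) := fun j => (compCD hw j).continuous
  have hcu : ∀ j : Fin 3, Continuous (fun y => u y j) := fun j => (compCD hu j).continuous
  have hintegL : ∀ i j : Fin 3, Integrable (fun x => w x i * Dc u i j x * w x j) volume :=
    fun i j => integK hws (((hcw i).mul (Dc_cont hu i j)).mul (hcw j))
      (fun x hx => by simp [comp_zero_off hx j])
  have hintegR : ∀ i j : Fin 3, Integrable (fun x => w x i * Dc w i j x * u x j) volume :=
    fun i j => integK hws (((hcw i).mul (Dc_cont hw i j)).mul (hcu j))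
      (fun x hx => by simp [comp_zero_off hx i])
  have hintegQ : ∀ i j : Fin 3, Integrable (fun x => w x j * Dc w i i x * u x j) volume :=
    fun i j => integK hws (((hcw j).mul (Dc_cont hw i i)).mul (hcu j))
      (fun x hx => by simp [comp_zero_off hx j])
  have key : ∀ i j : Fin 3, ∫ x, w x i * Dc u i j x * w x j
      = -(∫ x, w x i * Dc w i j x * u x j) - ∫ x, w x j * Dc w i i x * u x j := by
    intro i j
    have e1 : (fun x => w x i * Dc u i j x * w x j)
        = fun x => (w x i * w x j) * fderiv ℝ (fun y => u y j) x (EuclideanSpace.single i 1) := by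
      funext x; show _ = _ * Dc u i j x; ring
    have e2 : ∀ x : E3, fderiv ℝ (fun y => w y i * w y j) x (EuclideanSpace.single i 1)
        = w x i * Dc w i j x + w x j * Dc w i i x :=
      fun x => fderiv_mul_apply (compDiff hw i) (compDiff hw j) _
    rw [e1, ibp (EuclideanSpace.single i 1) ((compCD hw i).mul (compCD hw j)) (compCD hu j)
      ((comp_hcs hws i).mul_right)]
    have e3 : (fun x => fderiv ℝ (fun y => w y i * w y j) x (EuclideanSpace.single i 1) * u x j)
        = fun x => w x i * Dc w i j x * u x j + w x j * Dc w i i x * u x j := by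
      funext x; rw [e2 x]; ring
    rw [e3, integral_add (hintegR i j) (hintegQ i j)]
    ring
  rw [integral_finset_sum _ (fun i _ => integrable_finset_sum _ (fun j _ => hintegL i j)),
      integral_finset_sum _ (fun i _ => integrable_finset_sum _ (fun j _ => hintegR i j))]
  have eL : ∀ i : Fin 3, ∫ x, ∑ j, w x i * Dc u i j x * w x j
      = ∑ j, ∫ x, w x i * Dc u i j x * w x j :=
    fun i => integral_finset_sum _ (fun j _ => hintegL i j)
  have eR : ∀ i : Fin 3, ∫ x, ∑ j, w x i * Dc w i j x * u x j
      = ∑ j, ∫ x, w x i * Dc w i j x * u x j :=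
    fun i => integral_finset_sum _ (fun j _ => hintegR i j)
  simp only [eL, eR, key]
  have hQ : ∑ i : Fin 3, ∑ j : Fin 3, (∫ x, w x j * Dc w i i x * u x j) = 0 := by
    rw [Finset.sum_comm]
    apply Finset.sum_eq_zero
    intro j _
    have h1 : ∑ i : Fin 3, ∫ x, w x j * Dc w i i x * u x j
        = ∫ x, ∑ i : Fin 3, w x j * Dc w i i x * u x j :=
      (integral_finset_sum _ (fun i _ => hintegQ i j)).symm
    rw [h1]
    have ez : ∀ x : E3, ∑ i : Fin 3, w x j * Dc w i i x * u x j = 0 := by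
      intro x
      have h2 : ∑ i : Fin 3, w x j * Dc w i i x * u x j
          = w x j * (∑ i : Fin 3, Dc w i i x) * u x j := by
        rw [Finset.mul_sum, Finset.sum_mul]
      rw [h2, hdivw x, mul_zero, zero_mul]
    simp only [ez, integral_zero]
  simp only [Fin.sum_univ_three] at hQ ⊢
  linarith

/-- Pointwise Young inequality: `a·b·c ≤ μ b² + (1/4μ) a²c²`. -/
lemma young {μ : ℝ} (hμ : 0 < μ) (a b c : ℝ) :
    a * b * c ≤ μ * b^2 + 1/(4*μ) * (a^2 * c^2) := by
  have h4 : (0:ℝ) < 4 * μ := by linarith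
  have key : (a*b*c) * (4*μ) ≤ (μ * b^2 + 1/(4*μ) * (a^2 * c^2)) * (4*μ) := by
    have e : (1/(4*μ) * (a^2 * c^2)) * (4*μ) = a^2*c^2 := by field_simp
    nlinarith [sq_nonneg (2*μ*b - a*c)]
  exact le_of_mul_le_mul_right key h4

/-- Monotonicity of the cubic damping term. -/
lemma cube_mono (a b : E3) :
    (‖b‖^2/2) * ‖a - b‖^2 ≤ (inner ℝ (‖a‖^2 • a - ‖b‖^2 • b) (a - b) : ℝ) := by
  have h1 : (inner ℝ (‖a‖^2 • a - ‖b‖^2 • b) (a - b) : ℝ)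
      = ‖a‖^2 * ‖a‖^2 - (‖a‖^2 + ‖b‖^2) * (inner ℝ a b : ℝ) + ‖b‖^2 * ‖b‖^2 := by
    rw [inner_sub_left, inner_sub_right, inner_sub_right, real_inner_smul_left,
      real_inner_smul_left, real_inner_smul_left, real_inner_smul_left,
      real_inner_self_eq_norm_sq, real_inner_self_eq_norm_sq, real_inner_comm b a]
    ring
  have h2 : ‖a - b‖^2 = ‖a‖^2 - 2 * (inner ℝ a b : ℝ) + ‖b‖^2 := norm_sub_sq_real a b
  have h3 : (0:ℝ) ≤ ‖a - b‖^2 := sq_nonneg _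
  have h4 : (0:ℝ) ≤ ‖a‖^2 := sq_nonneg _
  nlinarith [sq_nonneg (‖a‖^2 - ‖b‖^2)]

lemma normsq (a : E3) : ‖a‖^2 = ∑ i, (a i)^2 := by
  rw [EuclideanSpace.norm_eq, Real.sq_sqrt (by positivity)]
  simp [Real.norm_eq_abs, sq_abs]

end GMonoAux

set_option maxHeartbeats 2000000 in
open MeasureTheory GMonoAux in
/-- Monotonicity of `G(u) = μAu + B(u) + αu + βC(u)` for `d = r = 3` with `2βμ ≥ 1`:
`⟨G(u₁) - G(u₂), u₁ - u₂⟩ ≥ 0`, with `C(u) = 𝒫(|u|²u)` and the pairing written out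
concretely as `μ‖∇(u₁-u₂)‖² + ⟨B(u₁)-B(u₂),u₁-u₂⟩ + α‖u₁-u₂‖² + β⟨C(u₁)-C(u₂),u₁-u₂⟩`. -/
theorem G_monotone_critical
    (O : Set (EuclideanSpace ℝ (Fin 3))) (hO : IsOpen O)
    (μ α β : ℝ) (hμ : 0 < μ) (hα : 0 < α) (hβ : 0 < β) (hβμ : 1 ≤ 2 * β * μ)
    (u₁ u₂ : EuclideanSpace ℝ (Fin 3) → EuclideanSpace ℝ (Fin 3))
    (h1 : ContDiff ℝ (⊤ : ℕ∞) u₁) (h2 : ContDiff ℝ (⊤ : ℕ∞) u₂)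
    (h1s : HasCompactSupport u₁) (h2s : HasCompactSupport u₂)
    (h1o : tsupport u₁ ⊆ O) (h2o : tsupport u₂ ⊆ O)
    (hdiv1 : ∀ x, ∑ i, fderiv ℝ (fun y => u₁ y i) x (EuclideanSpace.single i 1) = 0)
    (hdiv2 : ∀ x, ∑ i, fderiv ℝ (fun y => u₂ y i) x (EuclideanSpace.single i 1) = 0) :
    0 ≤ μ * (∫ x, gradSq (u₁ - u₂) x ∂(volume.restrict O))
        + (trilinearForm u₁ u₁ (u₁ - u₂) - trilinearForm u₂ u₂ (u₁ - u₂))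
        + α * (∫ x, ‖u₁ x - u₂ x‖ ^ 2 ∂(volume.restrict O))
        + β * (∫ x, (inner ℝ (‖u₁ x‖ ^ 2 • u₁ x - ‖u₂ x‖ ^ 2 • u₂ x)
            (u₁ x - u₂ x) : ℝ) ∂(volume.restrict O)) := by
  have h1' : ContDiff ℝ SM u₁ := h1.of_le (by simp)
  have h2' : ContDiff ℝ SM u₂ := h2.of_le (by simp)
  set w : E3 → E3 := u₁ - u₂ with hwdef
  have happ : ∀ (x : E3) (j : Fin 3), w x j = u₁ x j - u₂ x j := fun _ _ => rfl
  have hwsm : ContDiff ℝ SM w := h1'.sub h2'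
  set K : Set E3 := tsupport u₁ ∪ tsupport u₂ with hKdef
  have hK : IsCompact K := h1s.union h2s
  have hKO : K ⊆ O := Set.union_subset h1o h2o
  have hz1 : ∀ x ∉ K, u₁ x = 0 := fun x hx =>
    image_eq_zero_of_notMem_tsupport (fun h => hx (Set.mem_union_left _ h))
  have hz2 : ∀ x ∉ K, u₂ x = 0 := fun x hx =>
    image_eq_zero_of_notMem_tsupport (fun h => hx (Set.mem_union_right _ h))
  have h0w : ∀ x ∉ K, w x = 0 := fun x hx => by
    have : w x = u₁ x - u₂ x := rfl
    rw [this, hz1 x hx, hz2 x hx, sub_zero]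
  have hws : HasCompactSupport w := HasCompactSupport.intro hK h0w
  have hwK : tsupport w ⊆ K :=
    closure_minimal (fun x hx => by_contra (fun h => hx (h0w x h))) hK.isClosed
  have hwO : tsupport w ⊆ O := hwK.trans hKO
  -- componentwise facts
  have Dc_w : ∀ (i j : Fin 3) (x : E3), Dc w i j x = Dc u₁ i j x - Dc u₂ i j x := by
    intro i j x
    have e : (fun y => w y j) = fun y => u₁ y j - u₂ y j := rfl
    show fderiv ℝ (fun y => w y j) x (EuclideanSpace.single i 1) = _
    rw [e, fderiv_fun_sub (compDiff h1' j x) (compDiff h2' j x)]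
    rfl
  have hdiv1' : ∀ x, ∑ i, Dc u₁ i i x = 0 := hdiv1
  have hdiv2' : ∀ x, ∑ i, Dc u₂ i i x = 0 := hdiv2
  have hdivw : ∀ x, ∑ i, Dc w i i x = 0 := by
    intro x
    simp only [Dc_w, Finset.sum_sub_distrib, hdiv1' x, hdiv2' x, sub_zero]
  -- trilinear form difference
  have tridef1 : trilinearForm u₁ u₁ w = ∫ x, ∑ i, ∑ j, u₁ x i * Dc u₁ i j x * w x j := rfl
  have tridef2 : trilinearForm u₂ u₂ w = ∫ x, ∑ i, ∑ j, u₂ x i * Dc u₂ i j x * w x j := rfl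
  have contsum : ∀ (a b c : E3 → E3), ContDiff ℝ SM a → ContDiff ℝ SM b → ContDiff ℝ SM c →
      Continuous (fun x => ∑ i, ∑ j, a x i * Dc b i j x * c x j) := by
    intro a b c ha hb hc
    apply continuous_finset_sum _ (fun i _ => continuous_finset_sum _ (fun j _ => ?_))
    exact ((compCD ha i).continuous.mul (Dc_cont hb i j)).mul (compCD hc j).continuous
  have hI1 : Integrable (fun x => ∑ i, ∑ j, u₁ x i * Dc u₁ i j x * w x j) volume :=
    integK hK (contsum _ _ _ h1' h1' hwsm) (fun x hx => by
      apply Finset.sum_eq_zero; intro i _; apply Finset.sum_eq_zero; intro j _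
      rw [hz1 x hx]; simp)
  have hI2 : Integrable (fun x => ∑ i, ∑ j, u₂ x i * Dc u₂ i j x * w x j) volume :=
    integK hK (contsum _ _ _ h2' h2' hwsm) (fun x hx => by
      apply Finset.sum_eq_zero; intro i _; apply Finset.sum_eq_zero; intro j _
      rw [hz2 x hx]; simp)
  have zero_sum : ∀ (a : E3 → E3) (x : E3), a x = 0 → ∀ i j : Fin 3,
      a x i * Dc a i j x * w x j = 0 := by intro a x hax i j; rw [hax]; simp
  have hA : Integrable (fun x => ∑ i, ∑ j, u₂ x i * Dc w i j x * w x j) volume :=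
    integK hK (contsum _ _ _ h2' hwsm hwsm) (fun x hx => by
      apply Finset.sum_eq_zero; intro i _; apply Finset.sum_eq_zero; intro j _
      rw [hz2 x hx]; simp)
  have hB : Integrable (fun x => ∑ i, ∑ j, w x i * Dc u₂ i j x * w x j) volume :=
    integK hK (contsum _ _ _ hwsm h2' hwsm) (fun x hx => by
      apply Finset.sum_eq_zero; intro i _; apply Finset.sum_eq_zero; intro j _
      rw [h0w x hx]; simp)
  have hC : Integrable (fun x => ∑ i, ∑ j, w x i * Dc w i j x * w x j) volume :=
    integK hK (contsum _ _ _ hwsm hwsm hwsm) (fun x hx => by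
      apply Finset.sum_eq_zero; intro i _; apply Finset.sum_eq_zero; intro j _
      rw [h0w x hx]; simp)
  have expand : (fun x => (∑ i, ∑ j, u₁ x i * Dc u₁ i j x * w x j)
        - (∑ i, ∑ j, u₂ x i * Dc u₂ i j x * w x j))
      = fun x => ((∑ i, ∑ j, u₂ x i * Dc w i j x * w x j)
        + (∑ i, ∑ j, w x i * Dc u₂ i j x * w x j))
        + (∑ i, ∑ j, w x i * Dc w i j x * w x j) := by
    funext x
    simp only [← Finset.sum_sub_distrib, ← Finset.sum_add_distrib]
    refine Finset.sum_congr rfl fun i _ => Finset.sum_congr rfl fun j _ => ?_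
    rw [Dc_w i j x, happ x i]
    ring
  have T : trilinearForm u₁ u₁ w - trilinearForm u₂ u₂ w
      = - ∫ x, ∑ i, ∑ j, w x i * Dc w i j x * u₂ x j := by
    rw [tridef1, tridef2, ← integral_sub hI1 hI2]
    rw [show (fun x => (∑ i, ∑ j, u₁ x i * Dc u₁ i j x * w x j)
        - (∑ i, ∑ j, u₂ x i * Dc u₂ i j x * w x j)) = _ from expand]
    have hAB : Integrable (fun x => (∑ i, ∑ j, u₂ x i * Dc w i j x * w x j)
        + (∑ i, ∑ j, w x i * Dc u₂ i j x * w x j)) volume := hA.add hB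
    rw [integral_add hAB hC, integral_add hA hB]
    rw [sumM h2' hwsm h2s hws hdiv2', sumM hwsm hwsm hws hws hdivw]
    rw [sumN hwsm h2' hws hdivw]
    ring
  -- set-integral conversions
  have hgO : ∫ x, gradSq w x ∂(volume.restrict O) = ∫ x, gradSq w x := by
    apply setIntegral_eq_integral_of_forall_compl_eq_zero
    intro x hx
    have hxw : x ∉ tsupport w := fun h => hx (hwO h)
    have e : gradSq w x = ∑ i, ∑ j, (Dc w i j x)^2 := rfl
    rw [e]
    apply Finset.sum_eq_zero; intro i _; apply Finset.sum_eq_zero; intro j _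
    rw [Dc_zero hxw]; ring
  have hnO : ∫ x, ‖u₁ x - u₂ x‖^2 ∂(volume.restrict O) = ∫ x, ‖u₁ x - u₂ x‖^2 := by
    apply setIntegral_eq_integral_of_forall_compl_eq_zero
    intro x hx
    have hxK : x ∉ K := fun h => hx (hKO h)
    rw [hz1 x hxK, hz2 x hxK]; simp
  have hpO : ∫ x, (inner ℝ (‖u₁ x‖ ^ 2 • u₁ x - ‖u₂ x‖ ^ 2 • u₂ x) (u₁ x - u₂ x) : ℝ)
        ∂(volume.restrict O)
      = ∫ x, (inner ℝ (‖u₁ x‖ ^ 2 • u₁ x - ‖u₂ x‖ ^ 2 • u₂ x) (u₁ x - u₂ x) : ℝ) := by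
    apply setIntegral_eq_integral_of_forall_compl_eq_zero
    intro x hx
    have hxK : x ∉ K := fun h => hx (hKO h)
    rw [hz1 x hxK, hz2 x hxK]; simp
  -- integrability of the four global integrands
  have hgint : Integrable (fun x => gradSq w x) volume := by
    apply integK hK
    · apply continuous_finset_sum _ (fun i _ => continuous_finset_sum _ (fun j _ => ?_))
      exact (Dc_cont hwsm i j).pow 2
    · intro x hx
      have hxw : x ∉ tsupport w := fun h => hx (hwK h)
      rw [show gradSq w x = ∑ i, ∑ j, (Dc w i j x)^2 from rfl]
      apply Finset.sum_eq_zero; intro i _; apply Finset.sum_eq_zero; intro j _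
      rw [Dc_zero hxw]; ring
  have hSint : Integrable (fun x => ∑ i, ∑ j, w x i * Dc w i j x * u₂ x j) volume :=
    integK hK (contsum _ _ _ hwsm hwsm h2') (fun x hx => by
      apply Finset.sum_eq_zero; intro i _; apply Finset.sum_eq_zero; intro j _
      rw [h0w x hx]; simp)
  have hnint : Integrable (fun x => ‖u₁ x - u₂ x‖^2) volume :=
    integK hK ((h1'.continuous.sub h2'.continuous).norm.pow 2) (fun x hx => by
      rw [hz1 x hx, hz2 x hx]; simp)
  have hpint : Integrable (fun x =>
      (inner ℝ (‖u₁ x‖ ^ 2 • u₁ x - ‖u₂ x‖ ^ 2 • u₂ x) (u₁ x - u₂ x) : ℝ)) volume := by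
    apply integK hK
    · exact Continuous.inner
        (((h1'.continuous.norm.pow 2).smul h1'.continuous).sub
          ((h2'.continuous.norm.pow 2).smul h2'.continuous))
        (h1'.continuous.sub h2'.continuous)
    · intro x hx
      rw [hz1 x hx, hz2 x hx]; simp
  -- combine
  rw [hgO, hnO, hpO, T]
  have comb : μ * (∫ x, gradSq w x) + (- ∫ x, ∑ i, ∑ j, w x i * Dc w i j x * u₂ x j)
      + α * (∫ x, ‖u₁ x - u₂ x‖^2)
      + β * (∫ x, (inner ℝ (‖u₁ x‖ ^ 2 • u₁ x - ‖u₂ x‖ ^ 2 • u₂ x) (u₁ x - u₂ x) : ℝ))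
      = ∫ x, ((μ * gradSq w x - ∑ i, ∑ j, w x i * Dc w i j x * u₂ x j
        + α * ‖u₁ x - u₂ x‖^2)
        + β * (inner ℝ (‖u₁ x‖ ^ 2 • u₁ x - ‖u₂ x‖ ^ 2 • u₂ x) (u₁ x - u₂ x) : ℝ)) := by
    have c1 : Integrable (fun x => μ * gradSq w x) volume := hgint.const_mul μ
    have c2 : Integrable (fun x => μ * gradSq w x
        - ∑ i, ∑ j, w x i * Dc w i j x * u₂ x j) volume := c1.sub hSint
    have c3 : Integrable (fun x => μ * gradSq w x
        - (∑ i, ∑ j, w x i * Dc w i j x * u₂ x j) + α * ‖u₁ x - u₂ x‖^2) volume :=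
      c2.add (hnint.const_mul α)
    have c4 : Integrable (fun x => β * (inner ℝ (‖u₁ x‖ ^ 2 • u₁ x - ‖u₂ x‖ ^ 2 • u₂ x)
        (u₁ x - u₂ x) : ℝ)) volume := hpint.const_mul β
    rw [integral_add c3 c4, integral_add c2 (hnint.const_mul α),
      integral_sub c1 hSint,
      integral_const_mul, integral_const_mul, integral_const_mul]
    ring
  rw [show μ * (∫ x, gradSq w x) + (- ∫ x, ∑ i, ∑ j, w x i * Dc w i j x * u₂ x j)
      + α * (∫ x, ‖u₁ x - u₂ x‖^2)
      + β * (∫ x, (inner ℝ (‖u₁ x‖ ^ 2 • u₁ x - ‖u₂ x‖ ^ 2 • u₂ x) (u₁ x - u₂ x) : ℝ)) = _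
      from comb]
  apply integral_nonneg
  intro x
  show (0:ℝ) ≤ μ * gradSq w x - (∑ i, ∑ j, w x i * Dc w i j x * u₂ x j)
      + α * ‖u₁ x - u₂ x‖^2
      + β * (inner ℝ (‖u₁ x‖ ^ 2 • u₁ x - ‖u₂ x‖ ^ 2 • u₂ x) (u₁ x - u₂ x) : ℝ)
  -- pointwise inequality
  have e_g : gradSq w x = ∑ i, ∑ j, (Dc w i j x)^2 := rfl
  have hnw : ‖u₁ x - u₂ x‖^2 = ∑ i, (w x i)^2 := by
    rw [normsq (u₁ x - u₂ x)]
    exact Finset.sum_congr rfl (fun i _ => by rw [happ x i]; rfl)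
  have hu2 : ‖u₂ x‖^2 = ∑ j, (u₂ x j)^2 := normsq (u₂ x)
  have hSle : (∑ i, ∑ j, w x i * Dc w i j x * u₂ x j)
      ≤ μ * gradSq w x + 1/(4*μ) * (‖u₁ x - u₂ x‖^2 * ‖u₂ x‖^2) := by
    calc (∑ i, ∑ j, w x i * Dc w i j x * u₂ x j)
        ≤ ∑ i, ∑ j, (μ * (Dc w i j x)^2 + 1/(4*μ) * ((w x i)^2 * (u₂ x j)^2)) := by
          apply Finset.sum_le_sum; intro i _
          apply Finset.sum_le_sum; intro j _
          exact young hμ _ _ _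
      _ = μ * gradSq w x + 1/(4*μ) * (‖u₁ x - u₂ x‖^2 * ‖u₂ x‖^2) := by
          rw [e_g, hnw, hu2]
          simp only [Fin.sum_univ_three]
          ring
  have hple : (‖u₂ x‖^2/2) * ‖u₁ x - u₂ x‖^2
      ≤ (inner ℝ (‖u₁ x‖ ^ 2 • u₁ x - ‖u₂ x‖ ^ 2 • u₂ x) (u₁ x - u₂ x) : ℝ) :=
    cube_mono (u₁ x) (u₂ x)
  have hβ4 : 1/(4*μ) ≤ β/2 := by
    rw [div_le_div_iff₀ (by linarith) (by norm_num)]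
    nlinarith
  have hn0 : (0:ℝ) ≤ ‖u₁ x - u₂ x‖^2 := sq_nonneg _
  have hu0 : (0:ℝ) ≤ ‖u₂ x‖^2 := sq_nonneg _
  have hple' : β * ((‖u₂ x‖^2/2) * ‖u₁ x - u₂ x‖^2)
      ≤ β * (inner ℝ (‖u₁ x‖ ^ 2 • u₁ x - ‖u₂ x‖ ^ 2 • u₂ x) (u₁ x - u₂ x) : ℝ) :=
    mul_le_mul_of_nonneg_left hple hβ.le
  have hkey : 0 ≤ β * ((‖u₂ x‖^2/2) * ‖u₁ x - u₂ x‖^2)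
      - 1/(4*μ) * (‖u₁ x - u₂ x‖^2 * ‖u₂ x‖^2) := by
    nlinarith [mul_nonneg (sub_nonneg.mpr hβ4) (mul_nonneg hu0 hn0)]
  linarith [hSle, hple', hkey, mul_nonneg hα.le hn0]
end

section
/- Let κ : Ω → (0,∞) be in the class 𝔎₂, i.e. limsup_{t→∞} [κ(θ_{−t}ω)]² e^{−2αt} = 0 for all ω, where (θ_t) is a group of shifts and Υ(θ_{−t}ω)(s) = Υ(ω)(s−t). Then the function κ₂ defined by [κ₂(ω)]² = sup_{s≤0} ‖Υ(ω)(s)‖²_H e^{2αs} satisfies limsup_{t→∞} [κ₂(θ_{−t}ω)]² e^{−2αt} = limsup_{σ→−∞} ‖Υ(ω)(σ)‖²_H e^{2ασ}; in particular, if limsup_{σ→−∞} ‖Υ(ω)(σ)‖²_H e^{2ασ} = 0 then κ₂ ∈ 𝔎₂. -/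
/-! Shifting by `θ (-t)` turns the supremum of `σ ↦ ‖Υ ω σ‖² e^{2ασ}` over `σ ≤ 0` into
`e^{2αt}` times its supremum over `σ ≤ -t`, so `[κ₂(θ_{-t}ω)]² e^{-2αt}` is the running
supremum of that function over the tail `(-∞, -t]`. The running supremum of a function
has the same eventual upper bounds as `t → -∞` as the function itself, hence the same
limsup. -/

open Filter Set

theorem limsup_atTop_eq_limsup_atBot_of_isLUB_image_Iic {β : Type*}
    [ConditionallyCompleteLattice β] {f g : ℝ → β} (h : ∀ t, IsLUB (f '' Iic (-t)) (g t)) :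
    limsup g atTop = limsup f atBot := by
  have hle : ∀ t a, g t ≤ a ↔ ∀ σ ≤ -t, f σ ≤ a := fun t a => by
    simp only [isLUB_le_iff (h t), mem_upperBounds, forall_mem_image, mem_Iic]
  simp only [limsup_eq, eventually_atTop, eventually_atBot, hle]
  congr 1
  ext a
  constructor
  · rintro ⟨T, hT⟩
    exact ⟨-T, hT T le_rfl⟩
  · rintro ⟨c, hc⟩
    exact ⟨-c, fun t ht σ hσ => hc σ (by linarith)⟩

theorem isLUB_weighted_normSq_image_Iic_of_shift {H : Type*} [NormedAddCommGroup H]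
    {u v : ℝ → H} {α t : ℝ} (huv : ∀ s, u s = v (s + -t))
    (hbdd : BddAbove {x : ℝ | ∃ s ≤ (0:ℝ), x = ‖u s‖ ^ 2 * Real.exp (2 * α * s)}) :
    IsLUB ((fun σ => ‖v σ‖ ^ 2 * Real.exp (2 * α * σ)) '' Iic (-t))
      (sSup {x : ℝ | ∃ s ≤ (0:ℝ), x = ‖u s‖ ^ 2 * Real.exp (2 * α * s)} *
        Real.exp (-2 * α * t)) := by
  have hne : {x : ℝ | ∃ s ≤ (0:ℝ), x = ‖u s‖ ^ 2 * Real.exp (2 * α * s)}.Nonempty :=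
    ⟨_, 0, le_rfl, rfl⟩
  have himage : (fun σ => ‖v σ‖ ^ 2 * Real.exp (2 * α * σ)) '' Iic (-t) =
      (· * Real.exp (-2 * α * t)) ''
        {x : ℝ | ∃ s ≤ (0:ℝ), x = ‖u s‖ ^ 2 * Real.exp (2 * α * s)} := by
    ext x
    simp only [mem_image, mem_Iic, mem_ofPred_eq, huv]
    constructor
    · rintro ⟨σ, hσ, rfl⟩
      refine ⟨_, ⟨σ + t, by linarith, rfl⟩, ?_⟩
      rw [add_neg_cancel_right, mul_assoc, ← Real.exp_add]
      ring_nf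
    · rintro ⟨_, ⟨s, hs, rfl⟩, rfl⟩
      refine ⟨s + -t, by linarith, ?_⟩
      rw [mul_assoc _ (Real.exp _), ← Real.exp_add]
      ring_nf
  rw [himage]
  exact (isLUB_csSup hne hbdd).mul_right (Real.exp_pos _).le

theorem radius_function_in_class_K2_general
    {Ω : Type*} {H : Type*} [NormedAddCommGroup H]
    (θ : ℝ → Ω → Ω) (Υ : Ω → ℝ → H) (α : ℝ)
    (hcocycle : ∀ (ω : Ω) (s t : ℝ), Υ (θ s ω) t = Υ ω (t + s))
    (κ₂sq : Ω → ℝ)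
    (hκ : ∀ ω, κ₂sq ω =
      sSup {x : ℝ | ∃ s ≤ (0:ℝ), x = ‖Υ ω s‖ ^ 2 * Real.exp (2 * α * s)})
    (hbdd : ∀ ω, BddAbove {x : ℝ | ∃ s ≤ (0:ℝ), x = ‖Υ ω s‖ ^ 2 * Real.exp (2 * α * s)}) :
    (∀ ω, limsup (fun t => κ₂sq (θ (-t) ω) * Real.exp (-2 * α * t)) atTop =
        limsup (fun σ => ‖Υ ω σ‖ ^ 2 * Real.exp (2 * α * σ)) atBot) ∧
      ((∀ ω, limsup (fun σ => ‖Υ ω σ‖ ^ 2 * Real.exp (2 * α * σ)) atBot = 0) →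
        ∀ ω, limsup (fun t => κ₂sq (θ (-t) ω) * Real.exp (-2 * α * t)) atTop = 0) := by
  have hlimsup : ∀ ω, limsup (fun t => κ₂sq (θ (-t) ω) * Real.exp (-2 * α * t)) atTop =
      limsup (fun σ => ‖Υ ω σ‖ ^ 2 * Real.exp (2 * α * σ)) atBot := fun ω =>
    limsup_atTop_eq_limsup_atBot_of_isLUB_image_Iic fun t => by
      simpa only [hκ] using
        isLUB_weighted_normSq_image_Iic_of_shift (hcocycle ω (-t)) (hbdd (θ (-t) ω))
  exact ⟨hlimsup, fun h ω => (hlimsup ω).trans (h ω)⟩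

/-- Let `(θ_t)` be a group of shifts on `Ω` and `Υ : Ω → C(ℝ,H)` satisfy the cocycle
identity `Υ(θ_s ω)(t) = Υ(ω)(t+s)`. Define `[κ₂(ω)]² = sup_{s≤0} ‖Υ(ω)(s)‖²_H e^{2αs}`.
Then `limsup_{t→∞} [κ₂(θ_{-t}ω)]² e^{-2αt} = limsup_{σ→-∞} ‖Υ(ω)(σ)‖²_H e^{2ασ}`; in
particular, if the latter limsup vanishes (for every `ω`), then `κ₂` belongs to the
class `𝔎₂`, i.e. `limsup_{t→∞} [κ₂(θ_{-t}ω)]² e^{-2αt} = 0` for every `ω`. -/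
theorem radius_function_in_class_K2
    {Ω : Type*} {H : Type*} [NormedAddCommGroup H]
    (θ : ℝ → Ω → Ω) (Υ : Ω → ℝ → H) (α : ℝ) (hα : 0 < α)
    (hθ0 : θ 0 = id) (hθadd : ∀ s t, θ (s + t) = θ s ∘ θ t)
    (hcocycle : ∀ (ω : Ω) (s t : ℝ), Υ (θ s ω) t = Υ ω (t + s))
    (κ₂sq : Ω → ℝ)
    (hκ : ∀ ω, κ₂sq ω =
      sSup {x : ℝ | ∃ s ≤ (0:ℝ), x = ‖Υ ω s‖ ^ 2 * Real.exp (2 * α * s)})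
    (hbdd : ∀ ω, BddAbove {x : ℝ | ∃ s ≤ (0:ℝ), x = ‖Υ ω s‖ ^ 2 * Real.exp (2 * α * s)}) :
    (∀ ω, limsup (fun t => κ₂sq (θ (-t) ω) * Real.exp (-2 * α * t)) atTop =
        limsup (fun σ => ‖Υ ω σ‖ ^ 2 * Real.exp (2 * α * σ)) atBot) ∧
      ((∀ ω, limsup (fun σ => ‖Υ ω σ‖ ^ 2 * Real.exp (2 * α * σ)) atBot = 0) →
        ∀ ω, limsup (fun t => κ₂sq (θ (-t) ω) * Real.exp (-2 * α * t)) atTop = 0) :=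
  radius_function_in_class_K2_general θ Υ α hcocycle κ₂sq hκ hbdd
end
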